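/- Let C be an m-uniform clutter on [n] such that the determinantal facet ideal J_C is linearly presented. If σ₁, σ₂ are cliques of C with |σ₁ ∩ σ₂| ≥ m−1, then σ₁ ∪ σ₂ is a clique of C. -/

import Mathlib

open MvPolynomial DirectSum

open MvPolynomial DirectSum

section Frame

variable (K : Type) [Field K] (σ : Type) [Fintype σ] [DecidableEq σ]

/-- The degree `j` homogeneous component of the polynomial ring (`⊥` for negative `j`). -/
noncomputable def piece (j : ℤ) : AddSubgroup (MvPolynomial σ K) :=
  if 0 ≤ j then (homogeneousSubmodule σ K j.toNat).toAddSubgroup else ⊥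

/-- The graded free module `⊕_j S(-j)^{β j}`. -/
abbrev FreeMod (β : ℤ → ℕ) : Type :=
  ⨁ (j : ℤ), (Fin (β j) → MvPolynomial σ K)

/-- The degree `t` homogeneous component of `FreeMod β`. -/
noncomputable def fpiece (β : ℤ → ℕ) (t : ℤ) : AddSubgroup (FreeMod K σ β) where
  carrier := {x | ∀ (j : ℤ) (k : Fin (β j)), x j k ∈ piece K σ (t - j)}
  zero_mem' := by
    intro j k
    simp only [DirectSum.zero_apply, Pi.zero_apply]
    exact (piece K σ _).zero_mem
  add_mem' := by
    intro a b ha hb j k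
    have : (a + b) j k = a j k + b j k := by
      rw [DirectSum.add_apply, Pi.add_apply]
    rw [this]
    exact (piece K σ _).add_mem (ha j k) (hb j k)
  neg_mem' := by
    intro a ha j k
    have : (-a) j k = -(a j k) := by
      exact DFinsupp.neg_apply a j ▸ Pi.neg_apply _ k
    rw [this]
    exact (piece K σ _).neg_mem (ha j k)

/-- A minimal graded free resolution of the module `N` with grading `deg`. -/
structure MinFreeRes (N : Type) [AddCommGroup N] [Module (MvPolynomial σ K) N]
    (deg : ℤ → AddSubgroup N) where
  β : ℕ → ℤ → ℕ
  hfin : ∀ i, (Function.support (β i)).Finite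
  d : (i : ℕ) → FreeMod K σ (β (i + 1)) →ₗ[MvPolynomial σ K] FreeMod K σ (β i)
  aug : FreeMod K σ (β 0) →ₗ[MvPolynomial σ K] N
  graded_d : ∀ i t x, x ∈ fpiece K σ (β (i + 1)) t → d i x ∈ fpiece K σ (β i) t
  graded_aug : ∀ t x, x ∈ fpiece K σ (β 0) t → aug x ∈ deg t
  aug_surj : Function.Surjective aug
  exact_aug : LinearMap.ker aug = LinearMap.range (d 0)
  exact : ∀ i, LinearMap.ker (d i) = LinearMap.range (d (i + 1))
  minimal : ∀ i x (j : ℤ) (k : Fin (β i j)), constantCoeff ((d i x) j k) = 0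

/-- The natural grading on an ideal of the polynomial ring. -/
noncomputable def idealDeg (I : Ideal (MvPolynomial σ K)) (t : ℤ) : AddSubgroup I :=
  (piece K σ t).comap (I.subtype.toAddMonoidHom)

variable {K σ}

/-- The linear-strand differential of a minimal graded free resolution, for modules with
initial degree `dd`: the component of `d i` from the twist `i+1+dd` summand to the
twist `i+dd` summand. -/
noncomputable def strandD {N : Type} [AddCommGroup N] [Module (MvPolynomial σ K) N]
    {deg : ℤ → AddSubgroup N} (R : MinFreeRes K σ N deg) (dd : ℤ) (i : ℕ) :
    (Fin (R.β (i + 1) (((i + 1 : ℕ) : ℤ) + dd)) → MvPolynomial σ K) →ₗ[MvPolynomial σ K]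
      (Fin (R.β i ((i : ℤ) + dd)) → MvPolynomial σ K) :=
  (component (MvPolynomial σ K) ℤ _ ((i : ℤ) + dd)) ∘ₗ (R.d i) ∘ₗ
    (lof (MvPolynomial σ K) ℤ (fun j => Fin (R.β (i + 1) j) → MvPolynomial σ K) (((i + 1 : ℕ) : ℤ) + dd))

end Frame

section FrameEN

variable (R : Type) [CommRing R] (m n : ℕ)

/-- The ambient module of the Eagon-Northcott complex of an `m × n` matrix: the free
module with basis `b(σ; a)` indexed by pairs of a subset `σ ⊆ [n]` and a multi-index
`a : Fin m → ℕ`. -/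
abbrev ENMod : Type := (Finset (Fin n) × (Fin m → ℕ)) →₀ R

/-- The Eagon-Northcott differential for the matrix `α`:
`∂(b(σ;a)) = ∑_{j ∈ σ} ∑_{ℓ} (-1)^{|{v ∈ σ : v < j}|} α_{ℓ j} b(σ∖{j}; a - e_ℓ)`,
where terms with `a_ℓ = 0` are zero. -/
noncomputable def ENd (α : Matrix (Fin m) (Fin n) R) : ENMod R m n →ₗ[R] ENMod R m n :=
  Finsupp.lsum R fun p => LinearMap.toSpanSingleton R (ENMod R m n)
    (∑ j ∈ p.1, ∑ ℓ : Fin m,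
      if p.2 ℓ ≠ 0 then
        ((-1 : R) ^ (p.1.filter (fun v => v < j)).card * α ℓ j) •
          Finsupp.single (p.1.erase j, Function.update p.2 ℓ (p.2 ℓ - 1)) (1 : R)
      else 0)

/-- The `i`-th term `C_i(Δ; φ)` of the generalized Eagon-Northcott complex attached to a
simplicial complex `Δ`, as a submodule of `ENMod`: it is spanned by the basis elements
`b(σ; a)` with `σ ∈ Δ`, `|σ| = m + i` and `|a| = i`. -/
noncomputable def ENpart (Δ : Set (Finset (Fin n))) (i : ℕ) : Submodule R (ENMod R m n) :=
  Submodule.span R {x | ∃ (σ : Finset (Fin n)) (a : Fin m → ℕ), σ ∈ Δ ∧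
    σ.card = m + i ∧ (∑ ℓ, a ℓ) = i ∧ x = Finsupp.single (σ, a) (1 : R)}

end FrameEN

section FrameDFI

variable (K : Type) [Field K] (m n : ℕ)

/-- The generic `m × n` matrix of indeterminates. -/
noncomputable def genMatrix : Matrix (Fin m) (Fin n) (MvPolynomial (Fin m × Fin n) K) :=
  fun l j => MvPolynomial.X (l, j)

/-- The maximal minor of an `m × n` matrix `A` on the columns in `τ` (a set of
cardinality `m`), taken in increasing order. -/
noncomputable def minorOn {R : Type} [CommRing R] (A : Matrix (Fin m) (Fin n) R)
    (τ : Finset (Fin n)) (h : τ.card = m) : R :=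
  (A.submatrix id (fun k => ((τ.orderIsoOfFin h k) : Fin n))).det

/-- The determinantal facet ideal of a clutter `C`: the ideal generated by the maximal
minors of the generic matrix whose column sets are the circuits of `C`. -/
noncomputable def detFacetIdeal (C : Set (Finset (Fin n))) :
    Ideal (MvPolynomial (Fin m × Fin n) K) :=
  Ideal.span {f | ∃ τ ∈ C, ∃ h : τ.card = m, f = minorOn m n (genMatrix K m n) τ h}

/-- The clique complex of an `m`-uniform clutter: faces are the sets all of whose
`m`-subsets are circuits. -/
def cliqueComplex (C : Set (Finset (Fin n))) : Set (Finset (Fin n)) :=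
  {σ | ∀ τ ⊆ σ, τ.card = m → τ ∈ C}

/-- The generalized Eagon-Northcott complex `C(Δ; φ)` (for `φ` given by the generic
matrix) is isomorphic, as a complex of graded modules, to the linear strand of the
minimal graded free resolution `Res`. -/
def ENIsLinearStrand {N : Type} [AddCommGroup N]
    [Module (MvPolynomial (Fin m × Fin n) K) N] {deg : ℤ → AddSubgroup N}
    (Δ : Set (Finset (Fin n))) (Res : MinFreeRes K (Fin m × Fin n) N deg) : Prop :=
  ∃ e : (i : ℕ) → (ENpart (MvPolynomial (Fin m × Fin n) K) m n Δ i
      ≃ₗ[MvPolynomial (Fin m × Fin n) K]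
      (Fin (Res.β i ((i : ℤ) + m)) → MvPolynomial (Fin m × Fin n) K)),
    (∀ (i : ℕ) (t : ℤ) (x : ENpart (MvPolynomial (Fin m × Fin n) K) m n Δ i),
      ((∀ p, (x : ENMod (MvPolynomial (Fin m × Fin n) K) m n) p
          ∈ piece K (Fin m × Fin n) (t - p.1.card)) ↔
        (∀ k, e i x k ∈ piece K (Fin m × Fin n) (t - ((i : ℤ) + m))))) ∧
    (∀ (i : ℕ) (x : ENpart (MvPolynomial (Fin m × Fin n) K) m n Δ (i + 1))
        (y : ENpart (MvPolynomial (Fin m × Fin n) K) m n Δ i),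
      (y : ENMod (MvPolynomial (Fin m × Fin n) K) m n) =
        ENd (MvPolynomial (Fin m × Fin n) K) m n (genMatrix K m n)
          (x : ENMod (MvPolynomial (Fin m × Fin n) K) m n) →
      strandD Res (m : ℤ) i (e (i + 1) x) = e i y)

end FrameDFI

/-!
Linear presentation says that the syzygies of the maximal minors `f_τ` (`τ ∈ C`) are generated by
syzygies with linear coefficients. Grade everything by column multidegree, `f_τ` having the
indicator of `τ` as degree. Let circuits `τ₁, τ₂` meet in `m - 1` columns and suppose that
`σ = τ₁ ∪ τ₂` has an `m`-subset `σ \ {j₀}` that is not a circuit. Then the Koszul syzygy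
`f_{τ₂} e_{τ₁} - f_{τ₁} e_{τ₂}` is a combination of multihomogeneous linear syzygies whose
multidegrees are supported on `σ`. Each entry of such a syzygy is a linear form in one column,
and substituting column `j₀` for that column kills all the minors but one, so the syzygy vanishes,
and so would the Koszul syzygy. Gluing two cliques reduces to this case by exchanging one column at
a time.

The hypothesis speaks about all minimal graded free resolutions, so one has to be built: start
from the minors and repeatedly pick an irredundant homogeneous generating set of the kernel.
-/

open MvPolynomial Finset

namespace DetFacetIdeal

section Cliques

variable {α : Type*} [DecidableEq α]

def CircuitsGlue (m : ℕ) (C : Set (Finset α)) : Prop :=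
  ∀ τ₁ ∈ C, ∀ τ₂ ∈ C, #(τ₁ ∩ τ₂) + 1 = m → ∀ τ ⊆ τ₁ ∪ τ₂, #τ = m → τ ∈ C

theorem CircuitsGlue.mem_of_exchange {m : ℕ} {C : Set (Finset α)} (hC : CircuitsGlue m C)
    {τ : Finset α} (hτ : #τ = m) {c j j' : α} (hc : c ∉ τ) (hj : j ∈ τ) (hj' : j' ∈ τ)
    (hjj' : j ≠ j') (h₁ : insert c (τ.erase j) ∈ C) (h₂ : insert c (τ.erase j') ∈ C) :
    τ ∈ C := by
  refine hC _ h₁ _ h₂ ?_ τ (fun x hx => ?_) hτ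
  · have hinter : insert c (τ.erase j) ∩ insert c (τ.erase j') =
        insert c ((τ.erase j).erase j') := by
      ext x; simp only [mem_inter, mem_insert, mem_erase]; tauto
    have hj'j : j' ∈ τ.erase j := mem_erase.2 ⟨hjj'.symm, hj'⟩
    have hcard : 2 ≤ #τ := one_lt_card.2 ⟨j, hj, j', hj', hjj'⟩
    rw [hinter, card_insert_of_notMem fun h => hc (erase_subset _ _ (erase_subset _ _ h)),
      card_erase_of_mem hj'j, card_erase_of_mem hj]
    omega
  · by_cases hxj : x = j
    · exact mem_union_right _ (mem_insert_of_mem (mem_erase.2 ⟨hxj ▸ hjj', hx⟩))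
    · exact mem_union_left _ (mem_insert_of_mem (mem_erase.2 ⟨hxj, hx⟩))

theorem subset_or_subset_of_card_sdiff_le_one {ρ τ σ₁ σ₂ : Finset α} (hρ : ρ ⊆ σ₁ ∩ σ₂)
    (hτ : τ ⊆ σ₁ ∪ σ₂) (hρτ : ρ ⊆ τ) (hcard : #(τ \ ρ) ≤ 1) : τ ⊆ σ₁ ∨ τ ⊆ σ₂ := by
  rw [← union_sdiff_of_subset hρτ]
  by_cases hside : τ \ ρ ⊆ σ₁
  · exact Or.inl (union_subset (hρ.trans inter_subset_left) hside)
  · obtain ⟨x, hx, hx₁⟩ := not_subset.1 hside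
    refine Or.inr (union_subset (hρ.trans inter_subset_right) fun y hy => ?_)
    rw [card_le_one.1 hcard y hy x hx]
    exact (mem_union.1 (hτ (mem_sdiff.1 hx).1)).resolve_left hx₁

/-- Induction on `#(ρ \ τ)` for a common `(m - 1)`-subset `ρ` of the two cliques: exchanging two
elements of `τ \ ρ` against one element of `ρ \ τ` gives two circuits that glue to `τ`. -/
theorem CircuitsGlue.union_subset_mem {m : ℕ} {C : Set (Finset α)} (hC : CircuitsGlue m C)
    {σ₁ σ₂ : Finset α} (h₁ : ∀ τ ⊆ σ₁, #τ = m → τ ∈ C) (h₂ : ∀ τ ⊆ σ₂, #τ = m → τ ∈ C)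
    (hint : m - 1 ≤ #(σ₁ ∩ σ₂)) : ∀ τ ⊆ σ₁ ∪ σ₂, #τ = m → τ ∈ C := by
  obtain ⟨ρ, hρ, hρcard⟩ := exists_subset_card_eq hint
  suffices ∀ k τ, τ ⊆ σ₁ ∪ σ₂ → #τ = m → #(ρ \ τ) = k → τ ∈ C from
    fun τ hτ hτm => this _ τ hτ hτm rfl
  intro k
  induction k with
  | zero =>
    intro τ hτ hτm hk
    have hρτ : ρ ⊆ τ := sdiff_eq_empty_iff_subset.1 (card_eq_zero.1 hk)
    have hrest : #(τ \ ρ) ≤ 1 := by rw [card_sdiff_of_subset hρτ]; omega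
    rcases subset_or_subset_of_card_sdiff_le_one hρ hτ hρτ hrest with hτ₁ | hτ₂
    · exact h₁ τ hτ₁ hτm
    · exact h₂ τ hτ₂ hτm
  | succ k ih =>
    intro τ hτ hτm hk
    obtain ⟨c, hc⟩ : (ρ \ τ).Nonempty := card_pos.1 (by omega)
    have hcρ := (mem_sdiff.1 hc).1
    have htwo : 1 < #(τ \ ρ) := by
      have e₁ := card_inter_add_card_sdiff τ ρ
      have e₂ := card_inter_add_card_sdiff ρ τ
      rw [inter_comm] at e₂
      omega
    obtain ⟨j, hj, j', hj', hjj'⟩ := one_lt_card.1 htwo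
    have hexchange : ∀ i ∈ τ \ ρ, insert c (τ.erase i) ∈ C := by
      intro i hi
      refine ih _ (insert_subset (mem_union_left _ (hρ.trans inter_subset_left hcρ))
        ((erase_subset _ _).trans hτ)) ?_ ?_
      · rw [card_insert_of_notMem fun h => (mem_sdiff.1 hc).2 (erase_subset _ _ h),
          card_erase_of_mem (mem_sdiff.1 hi).1]
        have := card_pos.2 ⟨i, (mem_sdiff.1 hi).1⟩
        omega
      · have : ρ \ insert c (τ.erase i) = (ρ \ τ).erase c := by
          ext x
          have : x ∈ ρ → x ≠ i := fun hx hxi => (mem_sdiff.1 hi).2 (hxi ▸ hx)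
          simp only [mem_sdiff, mem_insert, mem_erase]
          tauto
        rw [this, card_erase_of_mem hc, hk]
        rfl
    exact hC.mem_of_exchange hτm (mem_sdiff.1 hc).2 (mem_sdiff.1 hj).1 (mem_sdiff.1 hj').1 hjj'
      (hexchange j hj) (hexchange j' hj')

end Cliques

section Grading

variable {K : Type} [Field K] {σ : Type}

theorem mem_piece_iff {t : ℤ} (ht : 0 ≤ t) {p : MvPolynomial σ K} :
    p ∈ piece K σ t ↔ p.IsHomogeneous t.toNat := by
  rw [piece, if_pos ht, Submodule.mem_toAddSubgroup, mem_homogeneousSubmodule]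

theorem mem_piece_natCast {d : ℕ} {p : MvPolynomial σ K} :
    p ∈ piece K σ d ↔ p.IsHomogeneous d := by
  rw [mem_piece_iff (Int.natCast_nonneg d), Int.toNat_natCast]

theorem eq_zero_of_mem_piece_of_neg {t : ℤ} (ht : t < 0) {p : MvPolynomial σ K}
    (hp : p ∈ piece K σ t) : p = 0 := by
  rwa [piece, if_neg (not_le.2 ht), AddSubgroup.mem_bot] at hp

theorem mul_mem_piece {a b : ℤ} {p q : MvPolynomial σ K} (hp : p ∈ piece K σ a)
    (hq : q ∈ piece K σ b) : p * q ∈ piece K σ (a + b) := by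
  rcases lt_or_ge a 0 with ha | ha
  · rw [eq_zero_of_mem_piece_of_neg ha hp, zero_mul]; exact zero_mem _
  rcases lt_or_ge b 0 with hb | hb
  · rw [eq_zero_of_mem_piece_of_neg hb hq, mul_zero]; exact zero_mem _
  rw [mem_piece_iff ha] at hp
  rw [mem_piece_iff hb] at hq
  rw [mem_piece_iff (by omega), show (a + b).toNat = a.toNat + b.toNat by omega]
  exact hp.mul hq

theorem constantCoeff_eq_zero_of_mem_piece {t : ℤ} (ht : t ≠ 0) {p : MvPolynomial σ K}
    (hp : p ∈ piece K σ t) : constantCoeff p = 0 := by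
  rcases lt_or_ge t 0 with hneg | hnonneg
  · rw [eq_zero_of_mem_piece_of_neg hneg hp, map_zero]
  · rw [mem_piece_iff hnonneg] at hp
    rw [constantCoeff_eq]
    exact hp.coeff_eq_zero (by simp; omega)

theorem eq_C_of_mem_piece_zero {p : MvPolynomial σ K} (hp : p ∈ piece K σ 0) :
    p = C (constantCoeff p) := by
  rw [constantCoeff_eq, ← totalDegree_eq_zero_iff_eq_C]
  rw [mem_piece_iff le_rfl] at hp
  by_cases hp0 : p = 0
  · rw [hp0, totalDegree_zero]
  · exact hp.totalDegree hp0

variable (K σ) in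
noncomputable def pieceProj (t : ℤ) : MvPolynomial σ K →+ MvPolynomial σ K :=
  if 0 ≤ t then (homogeneousComponent t.toNat).toAddMonoidHom else 0

theorem pieceProj_mem (t : ℤ) (p : MvPolynomial σ K) : pieceProj K σ t p ∈ piece K σ t := by
  by_cases ht : 0 ≤ t
  · rw [pieceProj, if_pos ht, mem_piece_iff ht]
    exact homogeneousComponent_isHomogeneous _ _
  · rw [pieceProj, if_neg ht]
    exact zero_mem _

theorem pieceProj_of_mem {t t' : ℤ} {p : MvPolynomial σ K} (hp : p ∈ piece K σ t) :
    pieceProj K σ t' p = if t' = t then p else 0 := by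
  rcases lt_or_ge t 0 with ht | ht
  · rw [eq_zero_of_mem_piece_of_neg ht hp, map_zero, ite_self]
  rw [mem_piece_iff ht, ← mem_homogeneousSubmodule] at hp
  by_cases ht' : 0 ≤ t'
  · rw [pieceProj, if_pos ht', LinearMap.toAddMonoidHom_coe, homogeneousComponent_of_mem hp]
    exact if_congr (by omega) rfl rfl
  · rw [pieceProj, if_neg ht', if_neg (by omega)]
    rfl

theorem le_totalDegree_of_pieceProj_ne_zero {t : ℤ} {p : MvPolynomial σ K}
    (h : pieceProj K σ t p ≠ 0) : 0 ≤ t ∧ t.toNat ≤ p.totalDegree := by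
  by_cases ht : 0 ≤ t
  · rw [pieceProj, if_pos ht, LinearMap.toAddMonoidHom_coe] at h
    exact ⟨ht, not_lt.1 fun hlt => h (homogeneousComponent_eq_zero _ _ hlt)⟩
  · rw [pieceProj, if_neg ht] at h
    exact absurd rfl h

theorem sum_pieceProj_sub (j : ℤ) (p : MvPolynomial σ K) {T : Finset ℤ}
    (hT : ∀ t ∉ T, pieceProj K σ (t - j) p = 0) : ∑ t ∈ T, pieceProj K σ (t - j) p = p := by
  set S := (range (p.totalDegree + 1)).image fun d : ℕ => j + d
  have hS : ∀ t ∉ S, pieceProj K σ (t - j) p = 0 := by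
    intro t ht
    by_contra h
    obtain ⟨h0, hle⟩ := le_totalDegree_of_pieceProj_ne_zero h
    exact ht (mem_image.2 ⟨(t - j).toNat, mem_range.2 (by omega), by omega⟩)
  rw [sum_subset (subset_union_left (s₂ := S)) fun t _ ht => hT t ht,
    ← sum_subset subset_union_right fun t _ ht => hS t ht,
    sum_image fun _ _ _ _ h => by simpa using h]
  conv_rhs => rw [← sum_homogeneousComponent p]
  refine sum_congr rfl fun d _ => ?_
  rw [add_sub_cancel_left, pieceProj, if_pos (Int.natCast_nonneg d), Int.toNat_natCast]
  rfl

variable {β : ℤ → ℕ}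

theorem smul_mem_fpiece {a b : ℤ} {p : MvPolynomial σ K} {y : FreeMod K σ β}
    (hp : p ∈ piece K σ a) (hy : y ∈ fpiece K σ β b) : p • y ∈ fpiece K σ β (a + b) := by
  intro j k
  have := mul_mem_piece hp (hy j k)
  rwa [show a + (b - j) = a + b - j by ring] at this

variable (K σ β) in
noncomputable def fpieceProj (t : ℤ) : FreeMod K σ β →+ FreeMod K σ β :=
  DFinsupp.mapRange.addMonoidHom fun j => AddMonoidHom.compLeft (pieceProj K σ (t - j)) _

theorem fpieceProj_apply (t : ℤ) (x : FreeMod K σ β) (j : ℤ) (k : Fin (β j)) :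
    fpieceProj K σ β t x j k = pieceProj K σ (t - j) (x j k) := rfl

theorem fpieceProj_mem (t : ℤ) (x : FreeMod K σ β) : fpieceProj K σ β t x ∈ fpiece K σ β t :=
  fun _ _ => pieceProj_mem _ _

theorem fpieceProj_of_mem {t t' : ℤ} {x : FreeMod K σ β} (hx : x ∈ fpiece K σ β t) :
    fpieceProj K σ β t' x = if t' = t then x else 0 := by
  refine DFinsupp.ext fun j => funext fun k => ?_
  rw [fpieceProj_apply, pieceProj_of_mem (hx j k)]
  split_ifs with h₁ h₂ h₂ <;> first | rfl | omega

theorem eq_zero_of_mem_fpiece_of_ne {t t' : ℤ} {x : FreeMod K σ β} (hx : x ∈ fpiece K σ β t)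
    (hx' : x ∈ fpiece K σ β t') (hne : t ≠ t') : x = 0 := by
  have := fpieceProj_of_mem hx' (t' := t)
  rwa [if_neg hne, fpieceProj_of_mem hx, if_pos rfl] at this

theorem exists_finset_sum_fpieceProj (x : FreeMod K σ β) :
    ∃ T : Finset ℤ, (∀ t ∉ T, fpieceProj K σ β t x = 0) ∧
      x = ∑ t ∈ T, fpieceProj K σ β t x := by
  classical
  set T := x.support.biUnion fun j => univ.biUnion fun k : Fin (β j) =>
    (range ((x j k).totalDegree + 1)).image fun d : ℕ => j + d
  have hT : ∀ t ∉ T, ∀ j k, pieceProj K σ (t - j) (x j k) = 0 := by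
    intro t ht j k
    by_contra h
    have hj : j ∈ x.support := DFinsupp.mem_support_iff.2 fun hx => h (by simp [hx])
    obtain ⟨h0, hle⟩ := le_totalDegree_of_pieceProj_ne_zero h
    exact ht (mem_biUnion.2 ⟨j, hj, mem_biUnion.2 ⟨k, mem_univ _,
      mem_image.2 ⟨(t - j).toNat, mem_range.2 (by omega), by omega⟩⟩⟩)
  refine ⟨T, fun t ht => ?_, ?_⟩
  · exact DFinsupp.ext fun j => funext fun k => hT t ht j k
  · refine DFinsupp.ext fun j => funext fun k => ?_
    rw [DFinsupp.finsetSum_apply, Finset.sum_apply]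
    exact (sum_pieceProj_sub j _ fun t ht => hT t ht j k).symm

end Grading

section Independence

variable {M : Type*} [AddCommGroup M]

def PiecesIndependent (P : ℤ → AddSubgroup M) : Prop :=
  ∀ (T : Finset ℤ) (x : ℤ → M), (∀ t ∈ T, x t ∈ P t) → ∑ t ∈ T, x t = 0 → ∀ t ∈ T, x t = 0

theorem piecesIndependent_of_proj {P : ℤ → AddSubgroup M} (π : ℤ → M →+ M)
    (hπ : ∀ t t' x, x ∈ P t → π t' x = if t' = t then x else 0) : PiecesIndependent P := by
  intro T x hx hsum t ht
  have h := congrArg (π t) hsum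
  rwa [map_sum, map_zero, sum_congr rfl fun s hs => hπ s t _ (hx s hs), sum_ite_eq, if_pos ht]
    at h

theorem PiecesIndependent.comap {N : Type*} [AddCommGroup N] {P : ℤ → AddSubgroup M}
    (hP : PiecesIndependent P) {f : N →+ M} (hf : Function.Injective f) :
    PiecesIndependent fun t => (P t).comap f := by
  intro T x hx hsum t ht
  refine hf ?_
  rw [map_zero]
  exact hP T (f ∘ x) hx (by simp [← map_sum, hsum]) t ht

end Independence

section FreeModules

variable {K : Type} [Field K] {σ : Type} {β : ℤ → ℕ}

theorem piecesIndependent_piece : PiecesIndependent (piece K σ) :=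
  piecesIndependent_of_proj (pieceProj K σ) fun _ _ _ hp => pieceProj_of_mem hp

theorem piecesIndependent_fpiece : PiecesIndependent (fpiece K σ β) :=
  piecesIndependent_of_proj (fpieceProj K σ β) fun _ _ _ hx => fpieceProj_of_mem hx

variable (K σ β) in
noncomputable def basisVec (j : ℤ) (k : Fin (β j)) : FreeMod K σ β :=
  DirectSum.of _ j (Pi.single k 1)

theorem basisVec_mem_fpiece (j : ℤ) (k : Fin (β j)) : basisVec K σ β j k ∈ fpiece K σ β j := by
  intro j' k'
  by_cases hj : j' = j
  · subst hj
    rw [basisVec, DirectSum.of_eq_same, sub_self]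
    by_cases hk : k' = k
    · subst hk
      rw [Pi.single_eq_same]
      exact (mem_piece_iff le_rfl).2 (isHomogeneous_one _ _)
    · rw [Pi.single_eq_of_ne hk]
      exact zero_mem _
  · rw [basisVec, DirectSum.of_eq_of_ne _ _ _ hj]
    exact zero_mem _

theorem of_eq_sum_smul_basisVec (j : ℤ) (v : Fin (β j) → MvPolynomial σ K) :
    DirectSum.of _ j v = ∑ k, v k • basisVec K σ β j k := by
  conv_lhs => rw [← Finset.univ_sum_single v]
  rw [map_sum]
  refine sum_congr rfl fun k _ => ?_
  rw [basisVec, ← DirectSum.lof_eq_of (MvPolynomial σ K), ← DirectSum.lof_eq_of (MvPolynomial σ K),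
    ← map_smul]
  congr 1
  ext k'
  by_cases hk : k' = k
  · subst hk; simp
  · simp [Pi.single_eq_of_ne hk]

theorem span_basisVec :
    Submodule.span (MvPolynomial σ K) {x | ∃ j k, basisVec K σ β j k = x} = ⊤ := by
  refine eq_top_iff.2 fun x _ => DirectSum.induction_on x (zero_mem _) (fun j v => ?_)
    fun _ _ => add_mem
  rw [of_eq_sum_smul_basisVec]
  exact sum_mem fun k _ => Submodule.smul_mem _ _ (Submodule.subset_span ⟨j, k, rfl⟩)

theorem module_finite_freeMod (hβ : (Function.support β).Finite) :
    Module.Finite (MvPolynomial σ K) (FreeMod K σ β) := by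
  refine Module.finite_def.2 (Submodule.fg_def.2 ⟨_, ?_, span_basisVec⟩)
  refine (hβ.biUnion fun j _ => Set.finite_range (basisVec K σ β j)).subset ?_
  rintro _ ⟨j, k, rfl⟩
  exact Set.mem_biUnion (Nat.pos_iff_ne_zero.1 (Nat.zero_lt_of_lt k.2)) ⟨k, rfl⟩

variable {M : Type} [AddCommGroup M] [Module (MvPolynomial σ K) M]

noncomputable def freeModLift (g : ∀ j, Fin (β j) → M) : FreeMod K σ β →ₗ[MvPolynomial σ K] M :=
  DirectSum.toModule _ ℤ M fun j => Fintype.linearCombination _ (g j)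

theorem freeModLift_of (g : ∀ j, Fin (β j) → M) (j : ℤ) (v : Fin (β j) → MvPolynomial σ K) :
    freeModLift g (DirectSum.of _ j v) = ∑ k, v k • g j k := by
  rw [← DirectSum.lof_eq_of (MvPolynomial σ K), freeModLift, DirectSum.toModule_lof,
    Fintype.linearCombination_apply]

theorem freeModLift_basisVec (g : ∀ j, Fin (β j) → M) (j : ℤ) (k : Fin (β j)) :
    freeModLift g (basisVec K σ β j k) = g j k := by
  rw [basisVec, freeModLift_of, sum_eq_single k (fun k' _ hk' => by
    rw [Pi.single_eq_of_ne hk', zero_smul]) (by simp), Pi.single_eq_same, one_smul]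

open Classical in
theorem freeModLift_apply (g : ∀ j, Fin (β j) → M) (x : FreeMod K σ β) :
    freeModLift g x = ∑ p ∈ x.support.sigma fun j => (univ : Finset (Fin (β j))),
      x p.1 p.2 • g p.1 p.2 := by
  classical
  conv_lhs => rw [← DirectSum.sum_support_of x]
  rw [map_sum, sum_sigma]
  exact sum_congr rfl fun j _ => freeModLift_of g j (x j)

theorem range_freeModLift (g : ∀ j, Fin (β j) → M) :
    LinearMap.range (freeModLift g) = Submodule.span (MvPolynomial σ K) {x | ∃ j k, g j k = x} := by
  rw [LinearMap.range_eq_map, ← span_basisVec, Submodule.map_span]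
  congr 1
  ext x
  simp [freeModLift_basisVec]

theorem freeModLift_mem {P : ℤ → AddSubgroup M}
    (hP : ∀ a b (p : MvPolynomial σ K) (y : M), p ∈ piece K σ a → y ∈ P b → p • y ∈ P (a + b))
    {g : ∀ j, Fin (β j) → M} (hg : ∀ j k, g j k ∈ P j) {t : ℤ} {x : FreeMod K σ β}
    (hx : x ∈ fpiece K σ β t) : freeModLift g x ∈ P t := by
  rw [freeModLift_apply]
  refine AddSubgroup.sum_mem _ fun p _ => ?_
  simpa using hP _ _ _ _ (hx p.1 p.2) (hg p.1 p.2)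

end FreeModules

section Kernels

variable {K : Type} [Field K] {σ : Type} {β : ℤ → ℕ}

def HasZeroConstantCoeffs (x : FreeMod K σ β) : Prop :=
  ∀ j k, constantCoeff (x j k) = 0

variable {M : Type} [AddCommGroup M] [Module (MvPolynomial σ K) M]

theorem fpieceProj_mem_ker {P : ℤ → AddSubgroup M} (hP : PiecesIndependent P)
    {f : FreeMod K σ β →ₗ[MvPolynomial σ K] M} (hf : ∀ t x, x ∈ fpiece K σ β t → f x ∈ P t)
    {x : FreeMod K σ β} (hx : x ∈ LinearMap.ker f) (t : ℤ) :
    fpieceProj K σ β t x ∈ LinearMap.ker f := by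
  obtain ⟨T, hT0, hTsum⟩ := exists_finset_sum_fpieceProj x
  by_cases ht : t ∈ T
  · refine hP T (fun s => f (fpieceProj K σ β s x)) (fun s _ => hf s _ (fpieceProj_mem s x))
      ?_ t ht
    rw [← map_sum, ← hTsum]
    exact hx
  · rw [hT0 t ht]
    exact zero_mem _

theorem hasZeroConstantCoeffs_of_mem_ker {f : FreeMod K σ β →ₗ[MvPolynomial σ K] M}
    (hgr : ∀ x ∈ LinearMap.ker f, ∀ t, fpieceProj K σ β t x ∈ LinearMap.ker f)
    (hhom : ∀ t x, x ∈ fpiece K σ β t → f x = 0 → HasZeroConstantCoeffs x)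
    {x : FreeMod K σ β} (hx : x ∈ LinearMap.ker f) : HasZeroConstantCoeffs x := by
  obtain ⟨T, -, hTsum⟩ := exists_finset_sum_fpieceProj x
  intro j k
  rw [hTsum, DFinsupp.finsetSum_apply, Finset.sum_apply, map_sum]
  exact sum_eq_zero fun t _ => hhom t _ (fpieceProj_mem t x) (hgr x hx t) j k

/-- A coefficient of a homogeneous relation with nonzero constant term is a nonzero scalar, and
would express its generator through the others. -/
theorem hasZeroConstantCoeffs_of_irredundant {g : ∀ j, Fin (β j) → M}
    (hirr : ∀ j k, g j k ∉ Submodule.span (MvPolynomial σ K)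
      {y | ∃ p : Σ j, Fin (β j), p ≠ ⟨j, k⟩ ∧ g p.1 p.2 = y})
    {t : ℤ} {z : FreeMod K σ β} (hz : z ∈ fpiece K σ β t) (hrel : freeModLift g z = 0) :
    HasZeroConstantCoeffs z := by
  classical
  intro j k
  by_contra hc
  have hdeg : t - j = 0 := by
    by_contra h
    exact hc (constantCoeff_eq_zero_of_mem_piece h (hz j k))
  have hconst := eq_C_of_mem_piece_zero (hdeg ▸ hz j k)
  have hmem : (⟨j, k⟩ : Σ j, Fin (β j)) ∈ z.support.sigma fun j => (univ : Finset (Fin (β j))) :=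
    mem_sigma.2 ⟨DFinsupp.mem_support_iff.2 fun h => hc (by simp [h]), mem_univ _⟩
  rw [freeModLift_apply, ← add_sum_erase _ _ hmem] at hrel
  set a := constantCoeff (z j k)
  set others := Submodule.span (MvPolynomial σ K)
    {y | ∃ p : Σ j, Fin (β j), p ≠ ⟨j, k⟩ ∧ g p.1 p.2 = y}
  have hrest : ∑ p ∈ (z.support.sigma fun j => (univ : Finset (Fin (β j)))).erase ⟨j, k⟩,
      z p.1 p.2 • g p.1 p.2 ∈ others :=
    sum_mem fun p hp => Submodule.smul_mem _ _ (Submodule.subset_span ⟨p, ne_of_mem_erase hp, rfl⟩)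
  have hscaled : (C a : MvPolynomial σ K) • g j k ∈ others := by
    have h := eq_neg_of_add_eq_zero_left hrel
    dsimp only at h
    rw [← hconst, h]
    exact neg_mem hrest
  have h := Submodule.smul_mem _ (C a⁻¹) hscaled
  rw [smul_smul, ← C_mul, inv_mul_cancel₀ hc, C_1, one_smul] at h
  exact hirr j k h

end Kernels

theorem exists_irredundant_subset {R M : Type*} [Semiring R] [AddCommMonoid M] [Module R M]
    [DecidableEq M] (G : Finset M) :
    ∃ G' ⊆ G, Submodule.span R (G' : Set M) = Submodule.span R G ∧
      ∀ g ∈ G', g ∉ Submodule.span R (G'.erase g : Set M) := by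
  induction G using Finset.strongInduction with
  | _ G ih =>
    by_cases hred : ∃ g ∈ G, g ∈ Submodule.span R (G.erase g : Set M)
    · obtain ⟨g, hg, hgspan⟩ := hred
      obtain ⟨G', hG', hspan, hirr⟩ := ih _ (erase_ssubset hg)
      refine ⟨G', hG'.trans (erase_subset g G), hspan.trans ?_, hirr⟩
      refine le_antisymm (Submodule.span_mono (by simp)) (Submodule.span_le.2 fun x hx => ?_)
      by_cases hxg : x = g
      · exact hxg ▸ hgspan
      · exact Submodule.subset_span (mem_erase.2 ⟨hxg, hx⟩)
    · push Not at hred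
      exact ⟨G, subset_rfl, rfl, hred⟩

section Step

variable {K : Type} [Field K] {σ : Type} {β : ℤ → ℕ}

theorem exists_homogeneous_finset_span [Finite σ] (hβ : (Function.support β).Finite)
    (N : Submodule (MvPolynomial σ K) (FreeMod K σ β))
    (hN : ∀ x ∈ N, ∀ t, fpieceProj K σ β t x ∈ N) :
    ∃ G : Finset (FreeMod K σ β), (∀ g ∈ G, ∃ t, g ∈ fpiece K σ β t) ∧
      Submodule.span (MvPolynomial σ K) (G : Set (FreeMod K σ β)) = N := by
  classical
  have := module_finite_freeMod (K := K) (σ := σ) hβ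
  have := isNoetherian_of_isNoetherianRing_of_finite (MvPolynomial σ K) (FreeMod K σ β)
  obtain ⟨G₀, hG₀⟩ := IsNoetherian.noetherian N
  choose T _ hT using fun x : FreeMod K σ β => exists_finset_sum_fpieceProj x
  refine ⟨G₀.biUnion fun x => (T x).image fun t => fpieceProj K σ β t x, ?_, le_antisymm ?_ ?_⟩
  · simp only [mem_biUnion, mem_image]
    rintro _ ⟨x, -, t, -, rfl⟩
    exact ⟨t, fpieceProj_mem t x⟩
  · simp only [Submodule.span_le, coe_biUnion, coe_image, Set.iUnion_subset_iff,
      Set.image_subset_iff]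
    exact fun x hx t _ => hN x (hG₀ ▸ Submodule.subset_span hx) t
  · rw [← hG₀, Submodule.span_le]
    intro x hx
    rw [SetLike.mem_coe, hT x]
    exact sum_mem fun t ht => Submodule.subset_span
      (mem_biUnion.2 ⟨x, hx, mem_image.2 ⟨t, ht, rfl⟩⟩)

theorem exists_irredundant_homogeneous_family [Finite σ] (hβ : (Function.support β).Finite)
    (N : Submodule (MvPolynomial σ K) (FreeMod K σ β))
    (hN : ∀ x ∈ N, ∀ t, fpieceProj K σ β t x ∈ N) :
    ∃ (β' : ℤ → ℕ) (g : ∀ j, Fin (β' j) → FreeMod K σ β), (Function.support β').Finite ∧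
      (∀ j k, g j k ∈ fpiece K σ β j) ∧
      Submodule.span (MvPolynomial σ K) {x | ∃ j k, g j k = x} = N ∧
      ∀ j k, g j k ∉ Submodule.span (MvPolynomial σ K)
        {y | ∃ p : Σ j, Fin (β' j), p ≠ ⟨j, k⟩ ∧ g p.1 p.2 = y} := by
  classical
  obtain ⟨G, hGhom, hGspan⟩ := exists_homogeneous_finset_span hβ N hN
  obtain ⟨G', hG'G, hG'span, hirr⟩ := exists_irredundant_subset (R := MvPolynomial σ K) G
  have hne : ∀ x ∈ G', x ≠ 0 := fun x hx h0 => hirr x hx (h0 ▸ zero_mem _)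
  have hdeg : ∀ x ∈ G', ∀ j j', x ∈ fpiece K σ β j → x ∈ fpiece K σ β j' → j = j' :=
    fun x hx j j' h h' => by_contra fun hjj => hne x hx (eq_zero_of_mem_fpiece_of_ne h h' hjj)
  let S : ℤ → Finset (FreeMod K σ β) := fun j => G'.filter (· ∈ fpiece K σ β j)
  let g : ∀ j, Fin (#(S j)) → FreeMod K σ β := fun j k => (S j).equivFin.symm k
  have hgS : ∀ j k, g j k ∈ S j := fun j k => ((S j).equivFin.symm k).2
  have hrange : {x | ∃ j k, g j k = x} = (G' : Set (FreeMod K σ β)) := by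
    ext x
    refine ⟨fun ⟨j, k, hx⟩ => hx ▸ (mem_filter.1 (hgS j k)).1, fun hx => ?_⟩
    obtain ⟨t, ht⟩ := hGhom x (hG'G hx)
    exact ⟨t, (S t).equivFin ⟨x, mem_filter.2 ⟨hx, ht⟩⟩, by simp [g]⟩
  refine ⟨fun j => #(S j), g, ?_, fun j k => (mem_filter.1 (hgS j k)).2,
    hrange ▸ hG'span.trans hGspan,
    fun j k hmem => ?_⟩
  · refine (G'.finite_toSet.biUnion fun x hx =>
      (show Set.Subsingleton {j | x ∈ fpiece K σ β j} from
        fun j hj j' hj' => hdeg x hx j j' hj hj').finite).subset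
      fun j hj => ?_
    obtain ⟨x, hx⟩ := card_pos.1 (Nat.pos_of_ne_zero hj)
    exact Set.mem_biUnion (mem_filter.1 hx).1 (mem_filter.1 hx).2
  · refine hirr _ (mem_filter.1 (hgS j k)).1 (Submodule.span_mono ?_ hmem)
    rintro _ ⟨⟨j', k'⟩, hp, rfl⟩
    refine mem_erase.2 ⟨fun heq => hp ?_, (mem_filter.1 (hgS j' k')).1⟩
    obtain rfl : j' = j := hdeg _ (mem_filter.1 (hgS j' k')).1 _ _ (mem_filter.1 (hgS j' k')).2
      (heq ▸ (mem_filter.1 (hgS j k)).2)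
    obtain rfl := (S j').equivFin.symm.injective (Subtype.ext heq)
    rfl

variable (K σ) in
/-- A free module of a resolution under construction, with the graded submodule `syz` that is
still to be resolved; `hasZeroConstantCoeffs` says `syz ⊆ 𝔪 F`, which makes the resolution
minimal. -/
structure SyzygyStage where
  β : ℤ → ℕ
  finite_support : (Function.support β).Finite
  syz : Submodule (MvPolynomial σ K) (FreeMod K σ β)
  fpieceProj_mem : ∀ x ∈ syz, ∀ t, fpieceProj K σ β t x ∈ syz
  hasZeroConstantCoeffs : ∀ x ∈ syz, HasZeroConstantCoeffs x

structure SyzygyStage.Step (P : SyzygyStage K σ) where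
  next : SyzygyStage K σ
  d : FreeMod K σ next.β →ₗ[MvPolynomial σ K] FreeMod K σ P.β
  d_mem : ∀ t x, x ∈ fpiece K σ next.β t → d x ∈ fpiece K σ P.β t
  range_d : LinearMap.range d = P.syz
  ker_d : LinearMap.ker d = next.syz

variable [Finite σ]

theorem SyzygyStage.nonempty_step (P : SyzygyStage K σ) : Nonempty P.Step := by
  obtain ⟨β', g, hβ', hg, hspan, hirr⟩ :=
    exists_irredundant_homogeneous_family P.finite_support P.syz P.fpieceProj_mem
  have hd_mem : ∀ t x, x ∈ fpiece K σ β' t → freeModLift g x ∈ fpiece K σ P.β t :=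
    fun _ _ hx => freeModLift_mem (P := fpiece K σ P.β) (fun _ _ _ _ => smul_mem_fpiece) hg hx
  have hgr : ∀ x ∈ LinearMap.ker (freeModLift g), ∀ t,
      fpieceProj K σ β' t x ∈ LinearMap.ker (freeModLift g) :=
    fun _ hx => fpieceProj_mem_ker piecesIndependent_fpiece hd_mem hx
  let next : SyzygyStage K σ :=
    { β := β'
      finite_support := hβ'
      syz := LinearMap.ker (freeModLift g)
      fpieceProj_mem := hgr
      hasZeroConstantCoeffs := fun _ hx => hasZeroConstantCoeffs_of_mem_ker hgr
        (fun _ _ hz hrel => hasZeroConstantCoeffs_of_irredundant hirr hz hrel) hx }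
  exact ⟨⟨next, freeModLift g, hd_mem, (range_freeModLift g).trans hspan, rfl⟩⟩

noncomputable def SyzygyStage.step (P : SyzygyStage K σ) : P.Step :=
  Classical.choice P.nonempty_step

noncomputable def SyzygyStage.iterate (P : SyzygyStage K σ) : ℕ → SyzygyStage K σ
  | 0 => P
  | i + 1 => (P.iterate i).step.next

noncomputable def SyzygyStage.toMinFreeRes (P : SyzygyStage K σ) {N : Type} [AddCommGroup N]
    [Module (MvPolynomial σ K) N] {deg : ℤ → AddSubgroup N}
    (aug : FreeMod K σ P.β →ₗ[MvPolynomial σ K] N)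
    (aug_mem : ∀ t x, x ∈ fpiece K σ P.β t → aug x ∈ deg t) (aug_surj : Function.Surjective aug)
    (ker_aug : LinearMap.ker aug = P.syz) : MinFreeRes K σ N deg where
  β i := (P.iterate i).β
  hfin i := (P.iterate i).finite_support
  d i := (P.iterate i).step.d
  aug := aug
  graded_d i := (P.iterate i).step.d_mem
  graded_aug := aug_mem
  aug_surj := aug_surj
  exact_aug := ker_aug.trans P.step.range_d.symm
  exact i := (P.iterate i).step.ker_d.trans (P.iterate (i + 1)).step.range_d.symm
  minimal i x := (P.iterate i).hasZeroConstantCoeffs _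
    ((P.iterate i).step.range_d ▸ LinearMap.mem_range_self _ x)

end Step

section Minors

variable {K : Type} [Field K] {m n : ℕ}

noncomputable def colWeight : Fin m × Fin n → Fin n →₀ ℕ := fun p => Finsupp.single p.2 1

noncomputable def colDegree (τ : Finset (Fin n)) : Fin n →₀ ℕ := ∑ j ∈ τ, Finsupp.single j 1

theorem colDegree_apply (τ : Finset (Fin n)) (j : Fin n) :
    colDegree τ j = if j ∈ τ then 1 else 0 := by
  simp [colDegree, Finsupp.finsetSum_apply, Finsupp.single_apply]

theorem colDegree_insert {τ : Finset (Fin n)} {j : Fin n} (hj : j ∉ τ) :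
    colDegree (insert j τ) = colDegree τ + Finsupp.single j 1 := by
  rw [colDegree, colDegree, sum_insert hj, add_comm]

theorem mem_of_colDegree_le {τ : Finset (Fin n)} {D : Fin n →₀ ℕ} (h : colDegree τ ≤ D)
    {j : Fin n} (hj : j ∈ τ) : 0 < D j := by
  have := h j
  rw [colDegree_apply, if_pos hj] at this
  omega

noncomputable def minorCol (τ : Finset (Fin n)) (h : #τ = m) (k : Fin m) : Fin n :=
  τ.orderEmbOfFin h k

theorem minorOn_eq {R : Type} [CommRing R] (A : Matrix (Fin m) (Fin n) R) (τ : Finset (Fin n))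
    (h : #τ = m) : minorOn m n A τ h = (A.submatrix id (minorCol τ h)).det := by
  simp [minorOn]
  rfl

theorem minorCol_mem (τ : Finset (Fin n)) (h : #τ = m) (k : Fin m) : minorCol τ h k ∈ τ :=
  τ.orderEmbOfFin_mem h k

theorem minorCol_injective (τ : Finset (Fin n)) (h : #τ = m) :
    Function.Injective (minorCol τ h) :=
  (τ.orderEmbOfFin h).injective

theorem exists_minorCol_eq {τ : Finset (Fin n)} (h : #τ = m) {j : Fin n} (hj : j ∈ τ) :
    ∃ k, minorCol τ h k = j :=
  ⟨(τ.orderIsoOfFin h).symm ⟨j, hj⟩, by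
    rw [minorCol, ← coe_orderIsoOfFin_apply, OrderIso.apply_symm_apply]⟩

theorem sum_minorCol {M : Type*} [AddCommMonoid M] (τ : Finset (Fin n)) (h : #τ = m)
    (f : Fin n → M) : ∑ k, f (minorCol τ h k) = ∑ j ∈ τ, f j :=
  ((τ.orderIsoOfFin h).toEquiv.sum_comp fun j : τ => f j).trans (sum_coe_sort τ f)

/-- Every monomial of the minor on `τ` uses each column of `τ` once. -/
theorem isWeightedHomogeneous_minorOn {M : Type*} [AddCommMonoid M] {w : Fin m × Fin n → M}
    {w' : Fin n → M} (hw : ∀ p, w p = w' p.2) (τ : Finset (Fin n)) (h : #τ = m) :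
    IsWeightedHomogeneous w (minorOn m n (genMatrix K m n) τ h) (∑ j ∈ τ, w' j) := by
  rw [← mem_weightedHomogeneousSubmodule, minorOn_eq, Matrix.det_apply']
  refine Submodule.sum_mem _ fun π _ => ?_
  rw [mem_weightedHomogeneousSubmodule, ← zero_add (∑ j ∈ τ, w' j), ← sum_minorCol τ h]
  refine IsWeightedHomogeneous.mul ?_ (IsWeightedHomogeneous.prod _ _ _ fun k _ => ?_)
  · rw [← map_intCast (C : K →+* MvPolynomial (Fin m × Fin n) K)]
    exact isWeightedHomogeneous_C w _
  · have := isWeightedHomogeneous_X K w (π k, minorCol τ h k)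
    rwa [hw] at this

theorem isWeightedHomogeneous_minorOn_colDegree (τ : Finset (Fin n)) (h : #τ = m) :
    IsWeightedHomogeneous colWeight (minorOn m n (genMatrix K m n) τ h) (colDegree τ) :=
  isWeightedHomogeneous_minorOn (w' := fun j => Finsupp.single j 1) (fun _ => rfl) τ h

theorem isHomogeneous_minorOn (τ : Finset (Fin n)) (h : #τ = m) :
    (minorOn m n (genMatrix K m n) τ h).IsHomogeneous m := by
  have := isWeightedHomogeneous_minorOn (K := K) (w := fun _ => 1) (w' := fun _ => 1)
    (fun _ => rfl) τ h
  rwa [sum_const, h, smul_eq_mul, mul_one] at this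

theorem map_minorOn {R S : Type} [CommRing R] [CommRing S] (f : R →+* S)
    (A : Matrix (Fin m) (Fin n) R) (τ : Finset (Fin n)) (h : #τ = m) :
    f (minorOn m n A τ h) = minorOn m n (A.map f) τ h :=
  RingHom.map_det f _

/-- The point at which the minor on `τ` becomes the identity determinant. -/
noncomputable def diagPoint (τ : Finset (Fin n)) (h : #τ = m) : Fin m × Fin n → K :=
  fun p => if p.2 = minorCol τ h p.1 then 1 else 0

theorem eval_diagPoint_minorOn (τ τ' : Finset (Fin n)) (h : #τ = m) (h' : #τ' = m) :
    eval (diagPoint τ h) (minorOn m n (genMatrix K m n) τ' h') = if τ' = τ then 1 else 0 := by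
  rw [map_minorOn, minorOn_eq]
  split_ifs with hτ
  · subst hτ
    convert Matrix.det_one (R := K) (n := Fin m)
    refine Matrix.ext fun ℓ k => ?_
    simp [genMatrix, diagPoint, Matrix.one_apply, (minorCol_injective τ' h).eq_iff, eq_comm]
  · obtain ⟨j, hj, hjτ⟩ := not_subset.1 fun hsub => hτ (eq_of_subset_of_card_le hsub (by omega))
    obtain ⟨k, rfl⟩ := exists_minorCol_eq h' hj
    refine Matrix.det_eq_zero_of_column_eq_zero k fun ℓ => ?_
    simp only [Matrix.submatrix_apply, Matrix.map_apply, genMatrix, eval_X, diagPoint, id]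
    exact if_neg fun heq : minorCol τ' h' k = minorCol τ h ℓ => hjτ (heq ▸ minorCol_mem τ h ℓ)

theorem minorOn_ne_zero (τ : Finset (Fin n)) (h : #τ = m) :
    minorOn m n (genMatrix K m n) τ h ≠ 0 := fun h0 => by
  simpa [h0] using eval_diagPoint_minorOn (K := K) τ τ h h

noncomputable def columnSubst (j₀ j₁ : Fin n) :
    MvPolynomial (Fin m × Fin n) K →ₐ[K] MvPolynomial (Fin m × Fin n) K :=
  rename fun p => if p.2 = j₁ then (p.1, j₀) else p

theorem columnSubst_minorOn_of_mem {τ : Finset (Fin n)} (h : #τ = m) {j₀ j₁ : Fin n}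
    (h₀ : j₀ ∈ τ) (h₁ : j₁ ∈ τ) (hne : j₀ ≠ j₁) :
    columnSubst j₀ j₁ (minorOn m n (genMatrix K m n) τ h) = 0 := by
  rw [← AlgHom.coe_toRingHom, map_minorOn, minorOn_eq]
  obtain ⟨k₀, rfl⟩ := exists_minorCol_eq h h₀
  obtain ⟨k₁, rfl⟩ := exists_minorCol_eq h h₁
  refine Matrix.det_zero_of_column_eq (fun hk => hne (congrArg _ hk)) fun ℓ => ?_
  simp [genMatrix, columnSubst, hne]

theorem columnSubst_minorOn_of_notMem {τ : Finset (Fin n)} (h : #τ = m) (j₀ : Fin n)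
    {j₁ : Fin n} (h₁ : j₁ ∉ τ) :
    columnSubst j₀ j₁ (minorOn m n (genMatrix K m n) τ h) = minorOn m n (genMatrix K m n) τ h := by
  rw [← AlgHom.coe_toRingHom, map_minorOn, minorOn_eq, minorOn_eq]
  congr 1
  refine Matrix.ext fun ℓ k => ?_
  have : minorCol τ h k ≠ j₁ := fun heq => h₁ (heq ▸ minorCol_mem τ h k)
  simp [genMatrix, columnSubst, this]

theorem eq_single_of_mem_support {u : MvPolynomial (Fin m × Fin n) K} (hu : u.IsHomogeneous 1)
    {W : Fin n →₀ ℕ} (hw : IsWeightedHomogeneous colWeight u W) {d : Fin m × Fin n →₀ ℕ}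
    (hd : d ∈ u.support) : ∃ p, d = Finsupp.single p 1 ∧ W = Finsupp.single p.2 1 := by
  have hcoeff := mem_support_iff.1 hd
  have hdeg : d.degree = 1 := by rw [Finsupp.degree_eq_weight_one]; exact hu hcoeff
  obtain ⟨p, hp⟩ := Multiset.card_eq_one.1
    (show Multiset.card (Finsupp.toMultiset d) = 1 by rw [Finsupp.card_toMultiset, ← hdeg]; rfl)
  have hd_eq : d = Finsupp.single p 1 := by
    rw [← Finsupp.toMultiset_toFinsupp d, hp]
    simp
  refine ⟨p, hd_eq, ?_⟩
  rw [← hw hcoeff, hd_eq, Finsupp.weight_single, one_smul]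
  rfl

theorem eq_zero_of_columnSubst_eq_zero {u : MvPolynomial (Fin m × Fin n) K}
    (hu : u.IsHomogeneous 1) {j₀ j₁ : Fin n}
    (hw : IsWeightedHomogeneous colWeight u (Finsupp.single j₁ 1))
    (h : columnSubst j₀ j₁ u = 0) : u = 0 := by
  have hinj : ∀ j : Fin n, Function.Injective fun ℓ : Fin m => (ℓ, j) :=
    fun j _ _ h => (Prod.mk.inj h).1
  obtain ⟨q, rfl⟩ := exists_rename_eq_of_vars_subset_range u _ (hinj j₁) fun x hx => by
    obtain ⟨d, hd, hx⟩ := (mem_vars_iff_mem_support x).1 hx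
    obtain ⟨p, rfl, hp⟩ := eq_single_of_mem_support hu hw hd
    obtain rfl := Finsupp.single_left_injective one_ne_zero hp
    exact ⟨p.1, by simpa using ((Finsupp.mem_support_single _ _ _).1 hx).1.symm⟩
  rw [columnSubst, rename_rename] at h
  have : ((fun p : Fin m × Fin n => if p.2 = j₁ then (p.1, j₀) else p) ∘ fun ℓ => (ℓ, j₁)) =
      fun ℓ => (ℓ, j₀) := by
    funext ℓ; simp
  rw [this, ← map_zero (rename fun ℓ : Fin m => (ℓ, j₀))] at h
  rw [rename_injective _ (hinj j₀) h, map_zero]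

end Minors

section MultidegreeProjection

attribute [local instance] MvPolynomial.weightedGradedAlgebra in
theorem weightedHomogeneousComponent_mul_of_isWeightedHomogeneous {R σ κ : Type*}
    [CommSemiring R] [DecidableEq κ] {w : σ → κ →₀ ℕ} {f : MvPolynomial σ R} {E : κ →₀ ℕ}
    (hf : IsWeightedHomogeneous w f E) (D : κ →₀ ℕ) (p : MvPolynomial σ R) :
    weightedHomogeneousComponent w D (p * f) =
      if E ≤ D then weightedHomogeneousComponent w (D - E) p * f else 0 := by
  have := DirectSum.coe_decompose_mul_of_right_mem (weightedHomogeneousSubmodule R w) D (a := p)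
    ((mem_weightedHomogeneousSubmodule _ _ _ _).2 hf)
  rwa [← weightedDecomposition.decompose'_apply, ← weightedDecomposition.decompose'_apply]

theorem isHomogeneous_weightedHomogeneousComponent {R σ M : Type*} [CommSemiring R]
    [AddCommMonoid M] {w : σ → M} {p : MvPolynomial σ R} {k : ℕ} (hp : p.IsHomogeneous k)
    (W : M) : (weightedHomogeneousComponent w W p).IsHomogeneous k := by
  classical
  intro d hd
  rw [coeff_weightedHomogeneousComponent] at hd
  split_ifs at hd
  · exact hp hd
  · exact absurd rfl hd

variable {K : Type} [Field K] {m n : ℕ} {ι : Type}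

/-- The `i`-th entry of a vector is the coefficient of the minor on `c i`; projecting the vector to
column multidegree `D` projects that entry to multidegree `D - colDegree (c i)`. -/
noncomputable def multidegProj (c : ι → Finset (Fin n)) (D : Fin n →₀ ℕ) :
    (ι → MvPolynomial (Fin m × Fin n) K) →+ (ι → MvPolynomial (Fin m × Fin n) K) where
  toFun v i := if colDegree (c i) ≤ D then
    weightedHomogeneousComponent colWeight (D - colDegree (c i)) (v i) else 0
  map_zero' := by
    funext i
    split_ifs <;> simp
  map_add' v w := by
    funext i
    simp only [Pi.add_apply]
    split_ifs <;> simp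

variable {c : ι → Finset (Fin n)}

theorem multidegProj_apply (D : Fin n →₀ ℕ) (v : ι → MvPolynomial (Fin m × Fin n) K) (i : ι) :
    multidegProj c D v i = if colDegree (c i) ≤ D then
      weightedHomogeneousComponent colWeight (D - colDegree (c i)) (v i) else 0 := rfl

theorem isWeightedHomogeneous_multidegProj (D : Fin n →₀ ℕ)
    (v : ι → MvPolynomial (Fin m × Fin n) K) (i : ι) :
    IsWeightedHomogeneous colWeight (multidegProj c D v i) (D - colDegree (c i)) := by
  rw [multidegProj_apply]
  split_ifs
  · exact weightedHomogeneousComponent_isWeightedHomogeneous _ _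
  · exact isWeightedHomogeneous_zero _ _ _

theorem isHomogeneous_multidegProj (D : Fin n →₀ ℕ) {v : ι → MvPolynomial (Fin m × Fin n) K}
    {i : ι} (hv : (v i).IsHomogeneous 1) : (multidegProj c D v i).IsHomogeneous 1 := by
  rw [multidegProj_apply]
  split_ifs
  · exact isHomogeneous_weightedHomogeneousComponent hv _
  · exact isHomogeneous_zero _ _ _

theorem le_of_multidegProj_ne_zero {D : Fin n →₀ ℕ} {v : ι → MvPolynomial (Fin m × Fin n) K}
    {i : ι} (h : multidegProj c D v i ≠ 0) : colDegree (c i) ≤ D := by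
  by_contra hle
  rw [multidegProj_apply, if_neg hle] at h
  exact h rfl

theorem multidegProj_smul {p : MvPolynomial (Fin m × Fin n) K} {E : Fin n →₀ ℕ}
    (hp : IsWeightedHomogeneous colWeight p E) (D : Fin n →₀ ℕ)
    (v : ι → MvPolynomial (Fin m × Fin n) K) :
    multidegProj c D (p • v) = if E ≤ D then p • multidegProj c (D - E) v else 0 := by
  funext i
  rw [multidegProj_apply, show (p • v) i = v i * p from mul_comm _ _]
  split_ifs with h₁ h₂
  · simp only [weightedHomogeneousComponent_mul_of_isWeightedHomogeneous hp, Pi.smul_apply,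
      multidegProj_apply, le_tsub_iff_left h₁, le_tsub_iff_right h₂, tsub_right_comm]
    split_ifs <;> simp [mul_comm]
  · rw [weightedHomogeneousComponent_mul_of_isWeightedHomogeneous hp, if_neg, Pi.zero_apply]
    rw [le_tsub_iff_left h₁]
    exact fun h => h₂ (le_trans le_add_self h)
  · rw [Pi.smul_apply, multidegProj_apply, if_neg fun h => h₁ (h.trans tsub_le_self), smul_zero]
  · rfl

theorem exists_column_of_multidegProj_ne_zero {D : Fin n →₀ ℕ}
    {v : ι → MvPolynomial (Fin m × Fin n) K} {i : ι} (hv : (v i).IsHomogeneous 1)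
    (hne : multidegProj c D v i ≠ 0) :
    ∃ j, D = colDegree (c i) + Finsupp.single j 1 ∧
      IsWeightedHomogeneous colWeight (multidegProj c D v i) (Finsupp.single j 1) := by
  obtain ⟨d, hd⟩ := support_nonempty.2 hne
  obtain ⟨p, -, hW⟩ := eq_single_of_mem_support (isHomogeneous_multidegProj D hv)
    (isWeightedHomogeneous_multidegProj D v i) hd
  refine ⟨p.2, ?_, hW ▸ isWeightedHomogeneous_multidegProj D v i⟩
  rw [← hW, add_tsub_cancel_of_le (le_of_multidegProj_ne_zero hne)]

theorem multidegProj_single [DecidableEq ι] {p : MvPolynomial (Fin m × Fin n) K}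
    {E : Fin n →₀ ℕ} (hp : IsWeightedHomogeneous colWeight p E) (i : ι) :
    multidegProj c (colDegree (c i) + E) (Pi.single i p) = Pi.single i p := by
  funext i'
  rw [multidegProj_apply]
  by_cases hi : i' = i
  · subst hi
    rw [if_pos le_self_add, add_tsub_cancel_left, Pi.single_eq_same,
      hp.weightedHomogeneousComponent_same]
  · rw [Pi.single_eq_of_ne hi, map_zero, ite_self]

end MultidegreeProjection

section LinearSyzygies

variable {K : Type} [Field K] {m n : ℕ} {ι : Type} [Fintype ι] {c : ι → Finset (Fin n)}

noncomputable def minorCombination (hc : ∀ i, #(c i) = m) :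
    (ι → MvPolynomial (Fin m × Fin n) K) →ₗ[MvPolynomial (Fin m × Fin n) K]
      MvPolynomial (Fin m × Fin n) K :=
  Fintype.linearCombination _ fun i => minorOn m n (genMatrix K m n) (c i) (hc i)

theorem minorCombination_apply (hc : ∀ i, #(c i) = m) (v : ι → MvPolynomial (Fin m × Fin n) K) :
    minorCombination hc v = ∑ i, v i * minorOn m n (genMatrix K m n) (c i) (hc i) :=
  Fintype.linearCombination_apply _ _ _

def linearSyzygies (hc : ∀ i, #(c i) = m) : Set (ι → MvPolynomial (Fin m × Fin n) K) :=
  {v | minorCombination hc v = 0 ∧ ∀ i, (v i).IsHomogeneous 1}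

theorem minorCombination_multidegProj (hc : ∀ i, #(c i) = m) (D : Fin n →₀ ℕ)
    (v : ι → MvPolynomial (Fin m × Fin n) K) :
    minorCombination hc (multidegProj c D v) =
      weightedHomogeneousComponent colWeight D (minorCombination hc v) := by
  simp only [minorCombination_apply, map_sum]
  refine sum_congr rfl fun i _ => ?_
  rw [weightedHomogeneousComponent_mul_of_isWeightedHomogeneous
    (isWeightedHomogeneous_minorOn_colDegree _ _), multidegProj_apply, ite_mul, zero_mul]

variable {hc : ∀ i, #(c i) = m}

/-- If the extra column `j` already lies in `c i`, the only circuit below the multidegree is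
`c i` itself, so the syzygy has a single entry. -/
theorem multidegProj_eq_zero_of_mem (hinj : Function.Injective c)
    {g : ι → MvPolynomial (Fin m × Fin n) K} (hg : g ∈ linearSyzygies hc) {D : Fin n →₀ ℕ}
    {i : ι} {j : Fin n} (hD : D = colDegree (c i) + Finsupp.single j 1) (hj : j ∈ c i) :
    multidegProj c D g i = 0 := by
  have honly : ∀ i', multidegProj c D g i' ≠ 0 → i' = i := by
    intro i' hi'
    have hle := le_of_multidegProj_ne_zero hi'
    refine hinj (eq_of_subset_of_card_le (fun x hx => ?_) (by rw [hc, hc]))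
    have hx := mem_of_colDegree_le hle hx
    rw [hD, Finsupp.add_apply, colDegree_apply, Finsupp.single_apply] at hx
    by_cases hxi : x ∈ c i
    · exact hxi
    · by_cases hjx : j = x
      · exact hjx ▸ hj
      · simp [hxi, hjx] at hx
  have hrel := minorCombination_multidegProj hc D g
  rw [hg.1, map_zero, minorCombination_apply, sum_eq_single i fun i' _ hi' => by
    rw [not_not.1 (mt (honly i') hi'), zero_mul]] at hrel
  · exact (mul_eq_zero.1 hrel).resolve_right (minorOn_ne_zero _ _)
  · simp

/-- Substituting column `j₀` for column `j` fixes the minor on `c i` and kills the minors on all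
other `m`-subsets of `insert j (c i)` that can occur, since those contain both columns. -/
theorem multidegProj_colDegree_insert_eq_zero (hinj : Function.Injective c)
    {g : ι → MvPolynomial (Fin m × Fin n) K} (hg : g ∈ linearSyzygies hc) {i : ι} {j j₀ : Fin n}
    (hj : j ∉ c i) (hj₀ : j₀ ∈ insert j (c i))
    (hnot : (insert j (c i)).erase j₀ ∉ Set.range c) :
    multidegProj c (colDegree (insert j (c i))) g i = 0 := by
  set S := insert j (c i)
  have hci : S.erase j = c i := erase_insert hj
  have hcard : #S = m + 1 := by rw [card_insert_of_notMem hj, hc]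
  have hkill : ∀ b ≠ i, multidegProj c (colDegree S) g b ≠ 0 →
      columnSubst j₀ j (minorOn m n (genMatrix K m n) (c b) (hc b)) = 0 := by
    intro b hb hub
    have hsub : c b ⊆ S := fun x hx => by
      have := mem_of_colDegree_le (le_of_multidegProj_ne_zero hub) hx
      rw [colDegree_apply] at this
      split_ifs at this with h
      · exact h
      · omega
    obtain ⟨x, hx, hxS⟩ := exists_eq_insert_iff.2 ⟨hsub, by rw [hc, hcard]⟩
    have hcb : c b = S.erase x := by rw [← hxS, erase_insert hx]
    have hxj₀ : x ≠ j₀ := fun h => hnot ⟨b, h ▸ hcb⟩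
    have hxj : x ≠ j := fun h => hb (hinj (hcb.trans (h ▸ hci)))
    refine columnSubst_minorOn_of_mem _ ?_ ?_ ?_
    · rw [hcb]; exact mem_erase.2 ⟨hxj₀.symm, hj₀⟩
    · rw [hcb]; exact mem_erase.2 ⟨hxj.symm, mem_insert_self _ _⟩
    · rintro rfl; exact hnot ⟨i, hci.symm⟩
  have hrel := congrArg (columnSubst j₀ j) (minorCombination_multidegProj hc (colDegree S) g)
  rw [hg.1, map_zero, map_zero, minorCombination_apply, map_sum, sum_eq_single i
    (fun b _ hb => by
      by_cases hub : multidegProj c (colDegree S) g b = 0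
      · rw [hub, zero_mul, map_zero]
      · rw [map_mul, hkill b hb hub, mul_zero]) (by simp),
    map_mul, columnSubst_minorOn_of_notMem _ _ hj] at hrel
  by_contra hne
  obtain ⟨j', hD, hw⟩ := exists_column_of_multidegProj_ne_zero (hg.2 i) hne
  rw [colDegree_insert hj, add_right_inj] at hD
  exact hne (eq_zero_of_columnSubst_eq_zero (isHomogeneous_multidegProj _ (hg.2 i)) (hD ▸ hw)
    ((mul_eq_zero.1 hrel).resolve_right (minorOn_ne_zero _ _)))

theorem multidegProj_eq_zero (hinj : Function.Injective c)
    {g : ι → MvPolynomial (Fin m × Fin n) K} (hg : g ∈ linearSyzygies hc) {σ : Finset (Fin n)}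
    (hσ : #σ = m + 1) {j₀ : Fin n} (hj₀ : j₀ ∈ σ) (hnot : σ.erase j₀ ∉ Set.range c)
    {D : Fin n →₀ ℕ} (hD : ∀ x, 0 < D x → x ∈ σ) : multidegProj c D g = 0 := by
  funext i
  by_contra hne
  obtain ⟨j, hDj, -⟩ := exists_column_of_multidegProj_ne_zero (hg.2 i) hne
  by_cases hj : j ∈ c i
  · exact hne (multidegProj_eq_zero_of_mem hinj hg hDj hj)
  · rw [← colDegree_insert hj] at hDj
    subst hDj
    obtain rfl : insert j (c i) = σ := eq_of_subset_of_card_le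
      (fun x hx => hD x (by rw [colDegree_apply, if_pos hx]; exact one_pos))
      (by rw [card_insert_of_notMem hj, hc, hσ])
    exact hne (multidegProj_colDegree_insert_eq_zero hinj hg hj hj₀ hnot)

theorem multidegProj_eq_zero_of_mem_span (hinj : Function.Injective c) {σ : Finset (Fin n)}
    (hσ : #σ = m + 1) {j₀ : Fin n} (hj₀ : j₀ ∈ σ) (hnot : σ.erase j₀ ∉ Set.range c)
    {x : ι → MvPolynomial (Fin m × Fin n) K}
    (hx : x ∈ Submodule.span (MvPolynomial (Fin m × Fin n) K) (linearSyzygies hc))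
    {D : Fin n →₀ ℕ} (hD : ∀ y, 0 < D y → y ∈ σ) : multidegProj c D x = 0 := by
  induction hx using Submodule.span_induction generalizing D with
  | mem g hg => exact multidegProj_eq_zero hinj hg hσ hj₀ hnot hD
  | zero => exact map_zero _
  | add x y _ _ hx hy => rw [map_add, hx hD, hy hD, add_zero]
  | smul a x _ hx =>
    rw [← sum_weightedHomogeneousComponent colWeight a,
      finsum_eq_sum _ (weightedHomogeneousComponent_finsupp a), sum_smul, map_sum]
    refine sum_eq_zero fun E _ => ?_
    rw [multidegProj_smul (weightedHomogeneousComponent_isWeightedHomogeneous E a)]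
    split_ifs
    · rw [hx fun y hy => hD y (lt_of_lt_of_le hy (tsub_le_self : (D - E) y ≤ D y)), smul_zero]
    · rfl

/-- The Koszul syzygy between the minors on two circuits meeting in `m - 1` columns lives in a
multidegree supported on their union; if some `m`-subset of the union were not a circuit it
would have to vanish. -/
theorem circuitsGlue_range_of_ker_le_span (hinj : Function.Injective c)
    (hlin : LinearMap.ker (minorCombination (K := K) hc) ≤
      Submodule.span (MvPolynomial (Fin m × Fin n) K) (linearSyzygies hc)) :
    CircuitsGlue m (Set.range c) := by
  classical
  rintro _ ⟨i₁, rfl⟩ _ ⟨i₂, rfl⟩ hint τ hτ hτm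
  by_contra hτC
  have hne : i₁ ≠ i₂ := by
    rintro rfl
    rw [inter_self, hc] at hint
    omega
  have hσ : #(c i₁ ∪ c i₂) = m + 1 := by
    have := card_union_add_card_inter (c i₁) (c i₂)
    rw [hc, hc] at this
    omega
  obtain ⟨j₀, hj₀τ, hσ_eq⟩ := exists_eq_insert_iff.2 ⟨hτ, by rw [hτm, hσ]⟩
  set f₁ := minorOn m n (genMatrix K m n) (c i₁) (hc i₁)
  set f₂ := minorOn m n (genMatrix K m n) (c i₂) (hc i₂)
  set z : ι → MvPolynomial (Fin m × Fin n) K := Pi.single i₁ f₂ - Pi.single i₂ f₁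
  have hz : z ∈ LinearMap.ker (minorCombination hc) := by
    simp [z, minorCombination, Fintype.linearCombination_apply_single, f₁, f₂, mul_comm]
  have hproj : multidegProj c (colDegree (c i₁) + colDegree (c i₂)) z = z := by
    rw [map_sub, multidegProj_single (isWeightedHomogeneous_minorOn_colDegree _ _), add_comm,
      multidegProj_single (isWeightedHomogeneous_minorOn_colDegree _ _)]
  have hzero := multidegProj_eq_zero_of_mem_span hinj hσ (hσ_eq ▸ mem_insert_self j₀ τ)
    (by rwa [← hσ_eq, erase_insert hj₀τ]) (hlin hz)
    (D := colDegree (c i₁) + colDegree (c i₂)) fun y hy => by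
      rw [Finsupp.add_apply, colDegree_apply, colDegree_apply] at hy
      rw [mem_union]
      by_contra h
      push Not at h
      simp [h.1, h.2] at hy
  rw [hproj] at hzero
  have := congrFun hzero i₁
  simp only [z, Pi.sub_apply, Pi.single_eq_same, Pi.single_eq_of_ne hne, sub_zero,
    Pi.zero_apply] at this
  exact minorOn_ne_zero _ _ this

end LinearSyzygies

section Resolution

variable {K : Type} [Field K] {σ : Type} {N : Type} [AddCommGroup N] [Module (MvPolynomial σ K) N]
  {deg : ℤ → AddSubgroup N}

theorem _root_.MinFreeRes.ker_aug_le_span (R : MinFreeRes K σ N deg) {t : ℤ}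
    (hβ : ∀ j, j ≠ t → R.β 1 j = 0) :
    LinearMap.ker R.aug ≤ Submodule.span (MvPolynomial σ K)
      {x | x ∈ LinearMap.ker R.aug ∧ x ∈ fpiece K σ (R.β 0) t} := by
  intro x hx
  rw [R.exact_aug, LinearMap.range_eq_map, ← span_basisVec, Submodule.map_span] at hx
  refine Submodule.span_mono ?_ hx
  rintro _ ⟨_, ⟨j, k, rfl⟩, rfl⟩
  obtain rfl : j = t := by_contra fun hj => absurd k.2 (by simp [hβ j hj])
  exact ⟨R.exact_aug ▸ LinearMap.mem_range_self _ _, R.graded_d 0 j _ (basisVec_mem_fpiece j k)⟩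

end Resolution

section Generators

variable {K : Type} [Field K] {m n : ℕ} {C : Set (Finset (Fin n))}

variable (m C) in
noncomputable def genDegrees : ℤ → ℕ := fun j => if j = m then Nat.card C else 0

theorem genDegrees_le (j : ℤ) : genDegrees m C j ≤ Nat.card C := by
  unfold genDegrees
  split_ifs <;> simp

theorem genDegrees_self : genDegrees m C m = Nat.card C := if_pos rfl

theorem eq_of_lt_genDegrees {j : ℤ} (k : Fin (genDegrees m C j)) : j = m := by
  by_contra h
  have := k.2
  simp [genDegrees, h] at this

theorem finite_support_genDegrees : (Function.support (genDegrees m C)).Finite :=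
  (Set.finite_singleton (m : ℤ)).subset fun _ hj => by_contra fun h => hj (if_neg h)

variable (m C) in
/-- Only `j = m` occurs; `Fin.castLE` avoids transporting along `genDegrees m C m = Nat.card C`. -/
noncomputable def circuitOf (j : ℤ) (k : Fin (genDegrees m C j)) : C :=
  (Finite.equivFin C).symm (Fin.castLE (genDegrees_le j) k)

theorem circuitOf_injective : Function.Injective (circuitOf m C m) :=
  (Finite.equivFin C).symm.injective.comp (Fin.castLE_injective _)

theorem circuitOf_surjective : Function.Surjective (circuitOf m C m) := fun τ =>
  ⟨Fin.cast genDegrees_self.symm (Finite.equivFin C τ),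
    (Finite.equivFin C).symm_apply_eq.2 (Fin.ext rfl)⟩

variable (m C) in
noncomputable def circuitFamily (k : Fin (genDegrees m C m)) : Finset (Fin n) := circuitOf m C m k

theorem circuitFamily_injective : Function.Injective (circuitFamily m C) :=
  Subtype.val_injective.comp circuitOf_injective

theorem range_circuitFamily : Set.range (circuitFamily m C) = C := by
  ext τ
  refine ⟨fun ⟨k, hk⟩ => hk ▸ (circuitOf m C m k).2, fun hτ => ?_⟩
  obtain ⟨k, hk⟩ := circuitOf_surjective ⟨τ, hτ⟩
  exact ⟨k, congrArg Subtype.val hk⟩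

theorem card_circuitFamily (hC : ∀ c ∈ C, #c = m) (k : Fin (genDegrees m C m)) :
    #(circuitFamily m C k) = m :=
  hC _ (circuitOf m C m k).2

variable (K) in
noncomputable def minorGen (hC : ∀ c ∈ C, #c = m) (j : ℤ) (k : Fin (genDegrees m C j)) :
    detFacetIdeal K m n C :=
  ⟨minorOn m n (genMatrix K m n) (circuitOf m C j k) (hC _ (circuitOf m C j k).2),
    Ideal.subset_span ⟨_, (circuitOf m C j k).2, _, rfl⟩⟩

variable (K) in
noncomputable def minorAug (hC : ∀ c ∈ C, #c = m) :
    FreeMod K (Fin m × Fin n) (genDegrees m C) →ₗ[MvPolynomial (Fin m × Fin n) K]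
      detFacetIdeal K m n C :=
  freeModLift (minorGen K hC)

theorem freeMod_genDegrees_eq_of (x : FreeMod K (Fin m × Fin n) (genDegrees m C)) :
    x = DirectSum.of _ (m : ℤ) (x m) := by
  refine DFinsupp.ext fun j => ?_
  by_cases hj : j = m
  · subst hj
    rw [DirectSum.of_eq_same]
  · rw [DirectSum.of_eq_of_ne _ _ _ hj]
    exact funext fun k => absurd (eq_of_lt_genDegrees k) hj

theorem coe_minorAug (hC : ∀ c ∈ C, #c = m) (x : FreeMod K (Fin m × Fin n) (genDegrees m C)) :
    (minorAug K hC x : MvPolynomial (Fin m × Fin n) K) =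
      minorCombination (card_circuitFamily hC) (x m) := by
  conv_lhs => rw [freeMod_genDegrees_eq_of x]
  rw [minorAug, freeModLift_of, minorCombination_apply, Submodule.coe_sum]
  rfl

theorem smul_mem_idealDeg {I : Ideal (MvPolynomial (Fin m × Fin n) K)} {a b : ℤ}
    {p : MvPolynomial (Fin m × Fin n) K} {y : I} (hp : p ∈ piece K (Fin m × Fin n) a)
    (hy : y ∈ idealDeg K (Fin m × Fin n) I b) : p • y ∈ idealDeg K (Fin m × Fin n) I (a + b) := by
  rw [idealDeg, AddSubgroup.mem_comap] at hy ⊢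
  exact mul_mem_piece hp hy

theorem piecesIndependent_idealDeg (I : Ideal (MvPolynomial (Fin m × Fin n) K)) :
    PiecesIndependent (idealDeg K (Fin m × Fin n) I) :=
  piecesIndependent_piece.comap Subtype.val_injective

theorem minorAug_mem (hC : ∀ c ∈ C, #c = m) {t : ℤ}
    {x : FreeMod K (Fin m × Fin n) (genDegrees m C)}
    (hx : x ∈ fpiece K (Fin m × Fin n) (genDegrees m C) t) :
    minorAug K hC x ∈ idealDeg K (Fin m × Fin n) (detFacetIdeal K m n C) t := by
  refine freeModLift_mem (P := idealDeg K (Fin m × Fin n) (detFacetIdeal K m n C))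
    (fun _ _ _ _ => smul_mem_idealDeg) (fun j k => ?_) hx
  obtain rfl := eq_of_lt_genDegrees k
  exact mem_piece_natCast.2 (isHomogeneous_minorOn _ _)

theorem minorAug_surjective (hC : ∀ c ∈ C, #c = m) : Function.Surjective (minorAug K hC) := by
  rw [← LinearMap.range_eq_top, minorAug, range_freeModLift]
  refine Submodule.map_injective_of_injective (detFacetIdeal K m n C).injective_subtype ?_
  rw [Submodule.map_span, Submodule.map_top, Submodule.range_subtype]
  conv_rhs => rw [detFacetIdeal]
  congr 1
  ext f
  constructor
  · rintro ⟨_, ⟨j, k, rfl⟩, rfl⟩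
    exact ⟨_, (circuitOf m C j k).2, _, rfl⟩
  · rintro ⟨τ, hτ, h, rfl⟩
    obtain ⟨k, hk⟩ := circuitOf_surjective ⟨τ, hτ⟩
    exact ⟨_, ⟨m, k, rfl⟩, by simp [minorGen, hk]⟩

/-- If some coefficient has a nonzero constant term, the relation has degree `m` and all its
coefficients are scalars; evaluating at `diagPoint` of the `k`-th circuit isolates the `k`-th. -/
theorem hasZeroConstantCoeffs_of_minorAug_eq_zero (hC : ∀ c ∈ C, #c = m) {t : ℤ}
    {z : FreeMod K (Fin m × Fin n) (genDegrees m C)}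
    (hz : z ∈ fpiece K (Fin m × Fin n) (genDegrees m C) t)
    (hrel : minorAug K hC z = 0) : HasZeroConstantCoeffs z := by
  intro j k
  obtain rfl := eq_of_lt_genDegrees k
  by_contra hc
  have hdeg : t - m = 0 := by_contra fun h => hc (constantCoeff_eq_zero_of_mem_piece h (hz m k))
  have hconst := eq_C_of_mem_piece_zero (hdeg ▸ hz m k)
  have h := congrArg (eval (diagPoint (circuitFamily m C k) (card_circuitFamily hC k)))
    (coe_minorAug hC z)
  rw [hrel, ZeroMemClass.coe_zero, map_zero, minorCombination_apply, map_sum,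
    sum_eq_single k (fun k' _ hk' => by
      rw [map_mul, eval_diagPoint_minorOn, if_neg (circuitFamily_injective.ne hk'), mul_zero])
      (by simp),
    map_mul, eval_diagPoint_minorOn, if_pos rfl, mul_one, hconst,
    eval_C] at h
  exact hc h.symm

variable (K) in
noncomputable def minorGenStage (hC : ∀ c ∈ C, #c = m) : SyzygyStage K (Fin m × Fin n) :=
  have hgr : ∀ x ∈ LinearMap.ker (minorAug K hC), ∀ t,
      fpieceProj K _ _ t x ∈ LinearMap.ker (minorAug K hC) :=
    fun _ hx => fpieceProj_mem_ker (piecesIndependent_idealDeg _) (fun _ _ => minorAug_mem hC) hx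
  { β := genDegrees m C
    finite_support := finite_support_genDegrees
    syz := LinearMap.ker (minorAug K hC)
    fpieceProj_mem := hgr
    hasZeroConstantCoeffs := fun _ hx => hasZeroConstantCoeffs_of_mem_ker hgr
      (fun _ _ hz hrel => hasZeroConstantCoeffs_of_minorAug_eq_zero hC hz hrel) hx }

variable (K) in
noncomputable def detFacetIdealRes (hC : ∀ c ∈ C, #c = m) :
    MinFreeRes K (Fin m × Fin n) (detFacetIdeal K m n C)
      (idealDeg K (Fin m × Fin n) (detFacetIdeal K m n C)) :=
  (minorGenStage K hC).toMinFreeRes (minorAug K hC) (fun _ _ => minorAug_mem hC)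
    (minorAug_surjective hC) rfl

theorem ker_minorCombination_le_span_linearSyzygies (hC : ∀ c ∈ C, #c = m)
    (hlin : ∀ j : ℤ, j ≠ (m : ℤ) + 1 → (detFacetIdealRes K hC).β 1 j = 0) :
    LinearMap.ker (minorCombination (K := K) (card_circuitFamily hC)) ≤
      Submodule.span _ (linearSyzygies (card_circuitFamily hC)) := by
  have key : LinearMap.ker (minorAug K hC) ≤ Submodule.span _
      {x | x ∈ LinearMap.ker (minorAug K hC) ∧ x ∈ fpiece K _ (genDegrees m C) (m + 1)} :=
    (detFacetIdealRes K hC).ker_aug_le_span hlin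
  intro z hz
  have hx : DirectSum.of _ (m : ℤ) z ∈ LinearMap.ker (minorAug K hC) := by
    refine LinearMap.mem_ker.2 (Subtype.ext ?_)
    rw [ZeroMemClass.coe_zero, ← hz, coe_minorAug, DirectSum.of_eq_same]
  have h := Submodule.mem_map_of_mem (f := DirectSum.component _ ℤ _ (m : ℤ)) (key hx)
  rw [← Submodule.span_image, ← DirectSum.apply_eq_component, DirectSum.of_eq_same] at h
  refine Submodule.span_mono ?_ h
  rintro _ ⟨y, ⟨hy, hyt⟩, rfl⟩
  refine ⟨?_, fun k => ?_⟩
  · rw [← DirectSum.apply_eq_component, ← coe_minorAug hC]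
    exact congrArg Subtype.val hy
  · have := hyt m k
    rwa [add_sub_cancel_left, ← Nat.cast_one, mem_piece_natCast] at this

end Generators

end DetFacetIdeal

theorem linearly_presented_cliques_glue_general
    (K : Type) [Field K] (m n : ℕ)
    (C : Set (Finset (Fin n))) (hC : ∀ c ∈ C, c.card = m)
    (hpres : ∀ Res : MinFreeRes K (Fin m × Fin n) (↥(detFacetIdeal K m n C))
        (idealDeg K (Fin m × Fin n) (detFacetIdeal K m n C)),
      ∀ j : ℤ, j ≠ (m : ℤ) + 1 → Res.β 1 j = 0)
    (σ₁ σ₂ : Finset (Fin n))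
    (h1 : σ₁ ∈ cliqueComplex m n C) (h2 : σ₂ ∈ cliqueComplex m n C)
    (hint : m - 1 ≤ (σ₁ ∩ σ₂).card) :
    σ₁ ∪ σ₂ ∈ cliqueComplex m n C := by
  have hlin := DetFacetIdeal.ker_minorCombination_le_span_linearSyzygies hC
    (hpres (DetFacetIdeal.detFacetIdealRes K hC))
  have hglue :=
    DetFacetIdeal.circuitsGlue_range_of_ker_le_span DetFacetIdeal.circuitFamily_injective hlin
  rw [DetFacetIdeal.range_circuitFamily] at hglue
  exact hglue.union_subset_mem h1 h2 hint

/-- If the determinantal facet ideal `J_C` of an `m`-uniform clutter `C` is linearly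
presented, then for any two cliques `σ₁, σ₂` of `C` with `|σ₁ ∩ σ₂| ≥ m - 1`, the union
`σ₁ ∪ σ₂` is again a clique of `C`. -/
theorem linearly_presented_cliques_glue
    (K : Type) [Field K] (m n : ℕ) (hm : 0 < m)
    (C : Set (Finset (Fin n))) (hC : ∀ c ∈ C, c.card = m)
    (hver : ∀ v : Fin n, ∃ c ∈ C, v ∈ c)
    (hpres : ∀ Res : MinFreeRes K (Fin m × Fin n) (↥(detFacetIdeal K m n C))
        (idealDeg K (Fin m × Fin n) (detFacetIdeal K m n C)),
      ∀ j : ℤ, j ≠ (m : ℤ) + 1 → Res.β 1 j = 0)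
    (σ₁ σ₂ : Finset (Fin n))
    (h1 : σ₁ ∈ cliqueComplex m n C) (h2 : σ₂ ∈ cliqueComplex m n C)
    (hint : m - 1 ≤ (σ₁ ∩ σ₂).card) :
    σ₁ ∪ σ₂ ∈ cliqueComplex m n C :=
  linearly_presented_cliques_glue_general K m n C hC hpres σ₁ σ₂ h1 h2 hint
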